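/- arXiv:2605.06269 — 4 statements merged into one kernel-verified Lean document; each statement's English description precedes it below -/
import Mathlib

section
/- Let x, y, x', y', u, v : List α. Then u and v are conjugate if and only if there exist a constant C : ℕ and an infinite set I ⊆ ℕ such that for every k ∈ I, levenshtein (x ++ u^k ++ y) (x' ++ v^k ++ y') ≤ C. (Proposition on conjugacy for the Levenshtein metric.) -/
/-!
If `u = p ++ q` and `v = q ++ p`, then `x ++ u^(k+1) ++ y = (x ++ p) ++ v^k ++ (q ++ y)`, so the two
words share the block `v^k` and differ only in boundedly many letters around it.

Conversely, the `c` edit operations of a word `s` into `t` leave at most `c + 1` blocks of `s` copied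
unchanged into `t`, so `s` and `t` have a common factor of length about `|s| / (c + 1)`. Comparing
lengths forces `|u| = |v|`. For large `k` the common factor of `x ++ u^k ++ y` and `x' ++ v^k ++ y'`
then contains a common factor of `u^k` and `v^k` of length `|u|`, and every factor of `u^k` of
length `|u|` is a rotation of `u`.
-/

/-- `wpow u k` is the k-fold concatenation `u ++ u ++ ⋯ ++ u` (k copies). -/
def wpow {α : Type*} (u : List α) (k : ℕ) : List α := (List.replicate k u).flatten

/-- Levenshtein edit distance, as formerly in Mathlib (`Mathlib/Data/List/EditDistance/Defs.lean`),
which has since been removed from Mathlib; reproduced here with its old meaning. -/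
structure Levenshtein.Cost (α β δ : Type*) where
  delete : α → δ
  insert : β → δ
  substitute : α → β → δ

def Levenshtein.defaultCost {α : Type*} [DecidableEq α] : Levenshtein.Cost α α ℕ where
  delete _ := 1
  insert _ := 1
  substitute a b := if a = b then 0 else 1

def Levenshtein.impl {α β δ : Type*} [AddZeroClass δ] [Min δ] (C : Levenshtein.Cost α β δ)
    (xs : List α) (y : β) (d : {r : List δ // 0 < r.length}) : {r : List δ // 0 < r.length} :=
  let ⟨ds, w⟩ := d
  xs.zip (ds.zip ds.tail) |>.foldr
    (init := ⟨[C.insert y + ds.getLast (List.ne_nil_of_length_pos w)], by simp⟩)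
    (fun ⟨x, d₀, d₁⟩ ⟨r, w⟩ =>
      ⟨min (C.delete x + r[0]) (min (C.insert y + d₀) (C.substitute x y + d₁)) :: r, by simp⟩)

def suffixLevenshtein {α β δ : Type*} [AddZeroClass δ] [Min δ] (C : Levenshtein.Cost α β δ)
    (xs : List α) (ys : List β) : {r : List δ // 0 < r.length} :=
  ys.foldr
    (Levenshtein.impl C xs)
    (xs.foldr (init := ⟨[0], by simp⟩)
      (fun a ⟨ds, w⟩ => ⟨(C.delete a + ds[0]) :: ds, by simp⟩))

def levenshtein {α β δ : Type*} [AddZeroClass δ] [Min δ] (C : Levenshtein.Cost α β δ)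
    (xs : List α) (ys : List β) : δ :=
  let ⟨r, w⟩ := suffixLevenshtein C xs ys
  r[0]

namespace List

variable {α : Type*} {w x y z : List α}

theorem IsInfix.exists_infix_of_append_left (h : w <:+: x ++ z) :
    ∃ w', w' <:+: w ∧ w' <:+: z ∧ w.length ≤ x.length + w'.length := by
  rcases infix_append_iff.1 h with hx | hz | ⟨l₁, l₂, rfl, h₁, h₂⟩
  · exact ⟨[], nil_infix, nil_infix, by simpa using hx.length_le⟩
  · exact ⟨w, infix_rfl, hz, by omega⟩
  · exact ⟨l₂, infix_append_right, h₂.isInfix, by simpa using h₁.length_le⟩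

theorem IsInfix.exists_infix_of_append_right (h : w <:+: z ++ y) :
    ∃ w', w' <:+: w ∧ w' <:+: z ∧ w.length ≤ w'.length + y.length := by
  rcases infix_append_iff.1 h with hz | hy | ⟨l₁, l₂, rfl, h₁, h₂⟩
  · exact ⟨w, infix_rfl, hz, by omega⟩
  · exact ⟨[], nil_infix, nil_infix, by simpa using hy.length_le⟩
  · exact ⟨l₁, infix_append_left, h₁.isInfix, by simpa using h₂.length_le⟩

theorem IsInfix.exists_infix_of_append_append (h : w <:+: x ++ z ++ y) :
    ∃ w', w' <:+: w ∧ w' <:+: z ∧ w.length ≤ x.length + w'.length + y.length := by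
  rw [append_assoc] at h
  obtain ⟨w₁, hw₁, hzy, hl₁⟩ := h.exists_infix_of_append_left
  obtain ⟨w₂, hw₂, hz, hl₂⟩ := hzy.exists_infix_of_append_right
  exact ⟨w₂, hw₂.trans hw₁, hz, by omega⟩

end List

section Power

variable {α : Type*}

theorem wpow_succ (u : List α) (k : ℕ) : wpow u (k + 1) = u ++ wpow u k := by
  simp [wpow, List.replicate_succ]

theorem length_wpow (u : List α) (k : ℕ) : (wpow u k).length = k * u.length := by
  simp [wpow]

theorem wpow_append_succ (p q : List α) (k : ℕ) :
    wpow (p ++ q) (k + 1) = p ++ wpow (q ++ p) k ++ q := by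
  induction k with
  | zero => simp [wpow]
  | succ k ih => rw [wpow_succ, ih, wpow_succ]; simp

theorem getElem_wpow (u : List α) (k i : ℕ) (h : i < (wpow u k).length) :
    (wpow u k)[i] = u[i % u.length]'(Nat.mod_lt _ (by
      rw [length_wpow] at h; exact Nat.pos_of_mul_pos_left (Nat.zero_lt_of_lt h))) := by
  induction k generalizing i with
  | zero => simp [wpow] at h
  | succ k ih =>
    simp only [wpow_succ, List.getElem_append]
    split_ifs with hi
    · simp [Nat.mod_eq_of_lt hi]
    · simp only [ih, Nat.mod_eq_sub_mod (not_lt.1 hi)]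

theorem List.IsInfix.isRotated_of_wpow {u z : List α} {k : ℕ} (h : z <:+: wpow u k)
    (hz : z.length = u.length) : u ~r z := by
  obtain ⟨a, b, hab⟩ := h
  refine ⟨a.length, List.ext_getElem (by simp [hz]) fun i h₁ h₂ => ?_⟩
  have hz_i : z[i] = (wpow u k)[a.length + i]'(by simp [← hab]; omega) := by
    simp [← hab, List.getElem_append_right, List.getElem_append_left h₂]
  rw [hz_i, getElem_wpow, List.getElem_rotate, add_comm]

end Power

section API

variable {α β δ : Type*} [AddZeroClass δ] [Min δ] (C : Levenshtein.Cost α β δ)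

theorem Levenshtein.impl_cons (x : α) (xs : List α) (y : β) (d : δ) (ds : List δ) (w)
    (w' : 0 < ds.length) :
    Levenshtein.impl C (x :: xs) y ⟨d :: ds, w⟩ =
      ⟨min (C.delete x + (Levenshtein.impl C xs y ⟨ds, w'⟩).1[0]'(Levenshtein.impl C xs y ⟨ds, w'⟩).2)
        (min (C.insert y + d) (C.substitute x y + ds[0])) :: (Levenshtein.impl C xs y ⟨ds, w'⟩).1,
        by simp⟩ :=
  match ds, w' with | _ :: _, _ => rfl

theorem suffixLevenshtein_cons₂ (xs : List α) (y : β) (ys : List β) :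
    suffixLevenshtein C xs (y :: ys) = Levenshtein.impl C xs y (suffixLevenshtein C xs ys) := rfl

theorem levenshtein_eq_getElem_suffixLevenshtein (xs : List α) (ys : List β) :
    levenshtein C xs ys = (suffixLevenshtein C xs ys).1[0]'(suffixLevenshtein C xs ys).2 := rfl

theorem suffixLevenshtein_cons₁ (x : α) (xs : List α) (ys : List β) :
    suffixLevenshtein C (x :: xs) ys =
      ⟨levenshtein C (x :: xs) ys :: (suffixLevenshtein C xs ys).1, by simp⟩ := by
  induction ys with
  | nil => rfl
  | cons y ys ih =>
    apply Subtype.ext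
    have tail_eq : (suffixLevenshtein C (x :: xs) (y :: ys)).1.tail
        = (suffixLevenshtein C xs (y :: ys)).1 := by
      rw [suffixLevenshtein_cons₂, ih, Levenshtein.impl_cons (w' := (suffixLevenshtein C xs ys).2)]
      rfl
    rw [← tail_eq, levenshtein_eq_getElem_suffixLevenshtein C (x :: xs) (y :: ys)]
    generalize suffixLevenshtein C (x :: xs) (y :: ys) = s
    obtain ⟨_ | ⟨a, l⟩, h⟩ := s
    · simp at h
    · rfl

theorem levenshtein_cons_cons (x : α) (xs : List α) (y : β) (ys : List β) :
    levenshtein C (x :: xs) (y :: ys) =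
      min (C.delete x + levenshtein C xs (y :: ys))
        (min (C.insert y + levenshtein C (x :: xs) ys)
          (C.substitute x y + levenshtein C xs ys)) := by
  rw [levenshtein_eq_getElem_suffixLevenshtein C (x :: xs) (y :: ys)]
  simp only [suffixLevenshtein_cons₂, suffixLevenshtein_cons₁,
    Levenshtein.impl_cons (w' := (suffixLevenshtein C xs ys).2)]
  rfl

theorem suffixLevenshtein_nil (ys : List β) :
    (suffixLevenshtein C [] ys).1 = [levenshtein C [] ys] := by
  cases ys <;> rfl

@[simp] theorem levenshtein_nil_cons (y : β) (ys : List β) :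
    levenshtein C [] (y :: ys) = C.insert y + levenshtein C [] ys := by
  have getLast_eq : ∀ (l : List δ) (hl : 0 < l.length), l = [levenshtein C [] ys] →
      l.getLast (List.ne_nil_of_length_pos hl) = levenshtein C [] ys := by
    rintro l hl rfl; rfl
  exact congrArg (C.insert y + ·)
    (getLast_eq _ (suffixLevenshtein C [] ys).2 (suffixLevenshtein_nil C ys))

@[simp] theorem levenshtein_cons_nil (x : α) (xs : List α) :
    levenshtein C (x :: xs) [] = C.delete x + levenshtein C xs [] := rfl

end API

section DefaultCost

variable {α : Type*} [DecidableEq α]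

local notation "lev" => levenshtein (Levenshtein.defaultCost : Levenshtein.Cost α α ℕ)

@[simp] theorem Levenshtein.defaultCost_delete (a : α) :
    (Levenshtein.defaultCost : Levenshtein.Cost α α ℕ).delete a = 1 := rfl

@[simp] theorem Levenshtein.defaultCost_insert (a : α) :
    (Levenshtein.defaultCost : Levenshtein.Cost α α ℕ).insert a = 1 := rfl

@[simp] theorem Levenshtein.defaultCost_substitute (a b : α) :
    (Levenshtein.defaultCost : Levenshtein.Cost α α ℕ).substitute a b = if a = b then 0 else 1 :=
  rfl

theorem levenshtein_defaultCost_cons_cons (a b : α) (s t : List α) :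
    lev (a :: s) (b :: t) =
      min (1 + lev s (b :: t)) (min (1 + lev (a :: s) t) ((if a = b then 0 else 1) + lev s t)) :=
  levenshtein_cons_cons _ a s b t

theorem levenshtein_nil_left (t : List α) : lev [] t = t.length := by
  induction t with
  | nil => rfl
  | cons b t ih => simp [ih, add_comm]

theorem levenshtein_nil_right (s : List α) : lev s [] = s.length := by
  induction s with
  | nil => rfl
  | cons a s ih => simp [ih, add_comm]

theorem levenshtein_cons_left_le (a : α) (s t : List α) : lev (a :: s) t ≤ lev s t + 1 := by
  cases t with
  | nil => simp [levenshtein_nil_right, add_comm]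
  | cons b t => rw [levenshtein_defaultCost_cons_cons]; omega

theorem levenshtein_cons_right_le (b : α) (s t : List α) : lev s (b :: t) ≤ lev s t + 1 := by
  cases s with
  | nil => simp [levenshtein_nil_left, add_comm]
  | cons a s => rw [levenshtein_defaultCost_cons_cons]; omega

theorem levenshtein_cons_cons_self_le (a : α) (s t : List α) : lev (a :: s) (a :: t) ≤ lev s t := by
  rw [levenshtein_defaultCost_cons_cons]; simp

theorem levenshtein_append_left_le (A s t : List α) : lev (A ++ s) t ≤ lev s t + A.length := by
  induction A with
  | nil => simp
  | cons a A ih => grind [levenshtein_cons_left_le a (A ++ s) t]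

theorem levenshtein_append_right_le (B s t : List α) : lev s (B ++ t) ≤ lev s t + B.length := by
  induction B with
  | nil => simp
  | cons b B ih => grind [levenshtein_cons_right_le b s (B ++ t)]

theorem levenshtein_append_append_self_le (m s t : List α) : lev (m ++ s) (m ++ t) ≤ lev s t := by
  induction m with
  | nil => simp
  | cons c m ih => exact (levenshtein_cons_cons_self_le c _ _).trans ih

theorem levenshtein_le_length_add_length (s t : List α) : lev s t ≤ s.length + t.length := by
  simpa [levenshtein_nil_left, add_comm] using levenshtein_append_left_le s [] t

theorem levenshtein_append_append_le (A m B A' B' : List α) :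
    lev (A ++ m ++ B) (A' ++ m ++ B') ≤ A.length + B.length + A'.length + B'.length := by
  have h₁ := levenshtein_append_left_le A (m ++ B) (A' ++ m ++ B')
  have h₂ := levenshtein_append_right_le A' (m ++ B) (m ++ B')
  have h₃ := levenshtein_append_append_self_le m B B'
  have h₄ := levenshtein_le_length_add_length B B'
  simp only [List.append_assoc] at *
  omega

theorem length_le_length_add_levenshtein (s t : List α) :
    t.length ≤ s.length + lev s t ∧ s.length ≤ t.length + lev s t := by
  induction s generalizing t with
  | nil => simp [levenshtein_nil_left]
  | cons a s ihs =>
    induction t with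
    | nil => simp [levenshtein_nil_right]
    | cons b t iht =>
      have := ihs (b :: t)
      have := ihs t
      rw [levenshtein_defaultCost_cons_cons]
      simp only [List.length_cons] at *
      split_ifs <;> omega

/- `p` is the block of `s` copied into `t` since the last edit and `w` the longest copied block so
far; each edit adds at most `|w| + 1` letters of `s` outside `p`. -/
theorem exists_common_prefix_infix_of_levenshtein_le (s t : List α) (c : ℕ) (h : lev s t ≤ c) :
    ∃ p w : List α, p <+: s ∧ p <+: t ∧ w <:+: s ∧ w <:+: t ∧ p.length ≤ w.length ∧
      s.length ≤ c * (w.length + 1) + p.length := by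
  induction s generalizing t c with
  | nil => exact ⟨[], [], by simp⟩
  | cons a s ihs =>
    induction t generalizing c with
    | nil =>
      refine ⟨[], [], by simp, by simp, by simp, by simp, le_rfl, ?_⟩
      rw [levenshtein_nil_right] at h
      simpa using h
    | cons b t iht =>
      have restart : ∀ (c' : ℕ) (s' t' p w : List α), s' <:+ a :: s → t' <:+ b :: t →
          s.length ≤ s'.length → w <:+: s' → w <:+: t' → p.length ≤ w.length →
          s'.length ≤ c' * (w.length + 1) + p.length →
          ∃ p w : List α, p <+: a :: s ∧ p <+: b :: t ∧ w <:+: a :: s ∧ w <:+: b :: t ∧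
            p.length ≤ w.length ∧ (a :: s).length ≤ (c' + 1) * (w.length + 1) + p.length := by
        intro c' s' t' p w hs ht hl hws hwt hpw hlen
        refine ⟨[], w, List.nil_prefix, List.nil_prefix, hws.trans hs.isInfix,
          hwt.trans ht.isInfix, Nat.zero_le _, ?_⟩
        simp only [List.length_cons, List.length_nil, add_one_mul]
        omega
      rw [levenshtein_defaultCost_cons_cons] at h
      obtain hdel | hins | hsub : 1 + lev s (b :: t) ≤ c ∨ 1 + lev (a :: s) t ≤ c ∨
          (if a = b then 0 else 1) + lev s t ≤ c := by
        simpa only [min_le_iff] using h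
      · obtain ⟨c', rfl⟩ : ∃ c', c = c' + 1 := ⟨c - 1, by omega⟩
        obtain ⟨p, w, -, -, hws, hwt, hpw, hlen⟩ := ihs (b :: t) c' (by omega)
        exact restart c' s (b :: t) p w (List.suffix_cons a s) List.suffix_rfl le_rfl hws hwt hpw
          hlen
      · obtain ⟨c', rfl⟩ : ∃ c', c = c' + 1 := ⟨c - 1, by omega⟩
        obtain ⟨p, w, -, -, hws, hwt, hpw, hlen⟩ := iht c' (by omega)
        exact restart c' (a :: s) t p w List.suffix_rfl (List.suffix_cons b t)
          (by simp) hws hwt hpw hlen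
      · split_ifs at hsub with hab
        · subst hab
          obtain ⟨p, w, hps, hpt, hws, hwt, hpw, hlen⟩ := ihs t c (by omega)
          by_cases hpw' : p.length < w.length
          · exact ⟨a :: p, w, (List.prefix_cons_inj a).2 hps, (List.prefix_cons_inj a).2 hpt,
              List.infix_cons hws, List.infix_cons hwt, by simpa using hpw', by simp; omega⟩
          · have hmono : c * (w.length + 1) ≤ c * (p.length + 1 + 1) :=
              Nat.mul_le_mul_left c (by omega)
            exact ⟨a :: p, a :: p, (List.prefix_cons_inj a).2 hps, (List.prefix_cons_inj a).2 hpt,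
              ((List.prefix_cons_inj a).2 hps).isInfix, ((List.prefix_cons_inj a).2 hpt).isInfix,
              le_rfl, by simp; omega⟩
        · obtain ⟨c', rfl⟩ : ∃ c', c = c' + 1 := ⟨c - 1, by omega⟩
          obtain ⟨p, w, -, -, hws, hwt, hpw, hlen⟩ := ihs t c' (by omega)
          exact restart c' s t p w (List.suffix_cons a s) (List.suffix_cons b t) le_rfl hws hwt hpw
            hlen

theorem exists_common_infix_of_levenshtein_le {s t : List α} {c : ℕ} (h : lev s t ≤ c) :
    ∃ w, w <:+: s ∧ w <:+: t ∧ s.length < (c + 1) * (w.length + 1) := by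
  obtain ⟨p, w, -, -, hws, hwt, hpw, hlen⟩ := exists_common_prefix_infix_of_levenshtein_le s t c h
  exact ⟨w, hws, hwt, by rw [add_one_mul]; omega⟩


theorem levenshtein_append_wpow_append_le (x y x' y' p q : List α) (k : ℕ) :
    lev (x ++ wpow (p ++ q) (k + 1) ++ y) (x' ++ wpow (q ++ p) (k + 1) ++ y') ≤
      x.length + y.length + x'.length + y'.length + 2 * (p.length + q.length) := by
  have hs : x ++ wpow (p ++ q) (k + 1) ++ y = (x ++ p) ++ wpow (q ++ p) k ++ (q ++ y) := by
    simp [wpow_append_succ]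
  have ht : x' ++ wpow (q ++ p) (k + 1) ++ y' = (x' ++ (q ++ p)) ++ wpow (q ++ p) k ++ y' := by
    simp [wpow_succ]
  rw [hs, ht]
  refine (levenshtein_append_append_le _ _ _ _ _).trans_eq ?_
  simp only [List.length_append]
  ring

theorem length_eq_of_levenshtein_le {x y x' y' u v : List α} {C k : ℕ}
    (h : lev (x ++ wpow u k ++ y) (x' ++ wpow v k ++ y') ≤ C)
    (hk : x.length + y.length + x'.length + y'.length + C < k) : u.length = v.length := by
  obtain ⟨h₁, h₂⟩ := length_le_length_add_levenshtein (x ++ wpow u k ++ y) (x' ++ wpow v k ++ y')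
  simp only [List.length_append, length_wpow] at h₁ h₂
  have hu : k * u.length < k * (v.length + 1) := by rw [mul_add_one]; omega
  have hv : k * v.length < k * (u.length + 1) := by rw [mul_add_one]; omega
  have := Nat.lt_of_mul_lt_mul_left hu
  have := Nat.lt_of_mul_lt_mul_left hv
  omega

theorem isRotated_of_levenshtein_le {x y x' y' u v : List α} {C k : ℕ}
    (h : lev (x ++ wpow u k ++ y) (x' ++ wpow v k ++ y') ≤ C) (huv : u.length = v.length)
    (hk : (C + 1) * (x.length + y.length + x'.length + y'.length + u.length + 1) < k) :
    u ~r v := by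
  obtain rfl | hu := eq_or_ne u []
  · rw [List.eq_nil_of_length_eq_zero huv.symm]
  obtain ⟨w, hws, hwt, hlen⟩ := exists_common_infix_of_levenshtein_le h
  have hku : k ≤ k * u.length := Nat.le_mul_of_pos_right k (List.length_pos_iff.2 hu)
  have hw : x.length + y.length + x'.length + y'.length + u.length < w.length := by
    simp only [List.length_append, length_wpow] at hlen
    have := Nat.lt_of_mul_lt_mul_left (hk.trans (by omega : k < (C + 1) * (w.length + 1)))
    omega
  obtain ⟨w₁, hw₁w, hw₁u, hl₁⟩ := hws.exists_infix_of_append_append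
  obtain ⟨w₂, hw₂w₁, hw₂v, hl₂⟩ := (hw₁w.trans hwt).exists_infix_of_append_append
  have hz : (w₂.take u.length).length = u.length := by simp; omega
  have hzu := (List.take_prefix u.length w₂).isInfix.trans (hw₂w₁.trans hw₁u)
  have hzv := (List.take_prefix u.length w₂).isInfix.trans hw₂v
  exact (hzu.isRotated_of_wpow hz).trans (hzv.isRotated_of_wpow (hz.trans huv)).symm

end DefaultCost

theorem stmt_0 {α : Type*} [DecidableEq α] (x y x' y' u v : List α) :
    List.IsRotated u v ↔
      ∃ (C : ℕ) (I : Set ℕ), I.Infinite ∧ ∀ k ∈ I,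
        levenshtein Levenshtein.defaultCost (x ++ wpow u k ++ y) (x' ++ wpow v k ++ y') ≤ C := by
  constructor
  · rintro ⟨n, hn⟩
    obtain ⟨p, q, rfl, rfl⟩ : ∃ p q, u = p ++ q ∧ v = q ++ p :=
      ⟨_, _, (List.take_append_drop (n % u.length) u).symm,
        hn ▸ List.rotate_eq_drop_append_take_mod⟩
    refine ⟨x.length + y.length + x'.length + y'.length + 2 * (p.length + q.length), Set.Ioi 0,
      Set.Ioi_infinite 0, fun k hk => ?_⟩
    obtain ⟨k, rfl⟩ := Nat.exists_eq_add_one_of_ne_zero (Nat.pos_iff_ne_zero.1 hk)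
    exact levenshtein_append_wpow_append_le x y x' y' p q k
  · rintro ⟨C, I, hI, hC⟩
    obtain ⟨k, hkI, hk⟩ := hI.exists_gt (max (x.length + y.length + x'.length + y'.length + C)
      ((C + 1) * (x.length + y.length + x'.length + y'.length + u.length + 1)))
    have huv := length_eq_of_levenshtein_le (hC k hkI) ((le_max_left _ _).trans_lt hk)
    exact isRotated_of_levenshtein_le (hC k hkI) huv ((le_max_right _ _).trans_lt hk)
end

section
/- Let ι and κ be finite nonempty types, let (D i, f i) for i : ι and (E j, g j) for j : κ be families of partial word functions, and let R and S be the word relations they define: R u = {v | ∃ i, u ∈ D i ∧ v = f i u} and S u = {v | ∃ j, u ∈ E j ∧ v = g j u}. If dom R = dom S, then D(R, S) = max (⨆ i, →d(f i, S)) (⨆ j, →d(g j, R)), i.e., the distance between R and S equals the maximum over all components of the relative distances →d(f i, S) and →d(g j, R). -/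
/-!
The supremum of the Hausdorff distances splits into the two directed suprema. A directed
supremum out of a relation given by a family of partial word functions reindexes as a supremum
over the components, since `f i u` ranges over `R u` exactly when `u ∈ D i`. Finally
`dom R = dom S` puts every `D i` inside `dom S` and every `E j` inside `dom R`, so no relative
distance takes its `⊤` branch.
-/

open scoped Classical

/-- The domain of a word relation. -/
def dom {A B : Type*} (R : List A → Set (List B)) : Set (List A) := {u | (R u).Nonempty}

/-- Directed distance between two sets of words. -/
noncomputable def dirDist {B : Type*} (d : List B → List B → ℕ∞) (L L' : Set (List B)) : ℕ∞ :=
  ⨆ v ∈ L, ⨅ v' ∈ L', d v v'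

/-- Hausdorff distance between two sets of words. -/
noncomputable def hausDist {B : Type*} (d : List B → List B → ℕ∞) (L L' : Set (List B)) : ℕ∞ :=
  max (dirDist d L L') (dirDist d L' L)

/-- Distance between two word relations. -/
noncomputable def relDist {A B : Type*} (d : List B → List B → ℕ∞)
    (R S : List A → Set (List B)) : ℕ∞ :=
  if dom R = dom S then ⨆ u ∈ dom R, hausDist d (R u) (S u) else ⊤

/-- Relative distance from a partial word function `(Df, f)` to a word relation `S`. -/
noncomputable def relativeDist {A B : Type*} (d : List B → List B → ℕ∞)
    (Df : Set (List A)) (f : List A → List B) (S : List A → Set (List B)) : ℕ∞ :=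
  if Df ⊆ dom S then ⨆ u ∈ Df, ⨅ v ∈ S u, d (f u) v else ⊤

section

variable {A B : Type*} (d : List B → List B → ℕ∞)

lemma dirDist_empty_left (L : Set (List B)) : dirDist d ∅ L = 0 := by
  simp [dirDist]

lemma biSup_dirDist_of_dom_subset {R S : List A → Set (List B)} {s : Set (List A)}
    (h : dom R ⊆ s) : ⨆ u ∈ s, dirDist d (R u) (S u) = ⨆ u, dirDist d (R u) (S u) := by
  refine iSup_congr fun u => ?_
  rcases (R u).eq_empty_or_nonempty with hu | hu
  · simp [hu, dirDist_empty_left]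
  · exact iSup_pos (h hu)

lemma relativeDist_of_subset {Df : Set (List A)} {f : List A → List B} {S : List A → Set (List B)}
    (h : Df ⊆ dom S) : relativeDist d Df f S = ⨆ u ∈ Df, ⨅ v ∈ S u, d (f u) v :=
  if_pos h

end

def relOfFamily {A B ι : Type*} (D : ι → Set (List A)) (f : ι → List A → List B) :
    List A → Set (List B) :=
  fun u => {v | ∃ i, u ∈ D i ∧ v = f i u}

section

variable {A B ι : Type*} (D : ι → Set (List A)) (f : ι → List A → List B)

lemma subset_dom_relOfFamily (i : ι) : D i ⊆ dom (relOfFamily D f) :=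
  fun u hu => ⟨f i u, i, hu, rfl⟩

lemma iSup_dirDist_relOfFamily (d : List B → List B → ℕ∞) (S : List A → Set (List B)) :
    ⨆ u, dirDist d (relOfFamily D f u) (S u) = ⨆ i, ⨆ u ∈ D i, ⨅ v ∈ S u, d (f i u) v := by
  simp only [dirDist, relOfFamily, Set.mem_ofPred_eq, iSup_exists, iSup_and,
    iSup_comm (ι := List B), iSup_iSup_eq_left]
  exact iSup_comm

end

theorem stmt_5_general {A B : Type*} {ι κ : Type*}
(d : List B → List B → ℕ∞)
    (D : ι → Set (List A)) (f : ι → List A → List B)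
    (E : κ → Set (List A)) (g : κ → List A → List B)
    (R S : List A → Set (List B))
    (hR : ∀ u, R u = {v | ∃ i, u ∈ D i ∧ v = f i u})
    (hS : ∀ u, S u = {v | ∃ j, u ∈ E j ∧ v = g j u})
    (hdom : dom R = dom S) :
    relDist d R S =
      max (⨆ i, relativeDist d (D i) (f i) S) (⨆ j, relativeDist d (E j) (g j) R) := by
  obtain rfl : R = relOfFamily D f := funext hR
  obtain rfl : S = relOfFamily E g := funext hS
  have hD i : D i ⊆ dom (relOfFamily E g) := hdom ▸ subset_dom_relOfFamily D f i
  have hE j : E j ⊆ dom (relOfFamily D f) := hdom ▸ subset_dom_relOfFamily E g j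
  rw [relDist, if_pos hdom]
  simp only [hausDist, iSup_sup_eq, relativeDist_of_subset d (hD _),
    relativeDist_of_subset d (hE _), biSup_dirDist_of_dom_subset d le_rfl,
    biSup_dirDist_of_dom_subset d hdom.ge, iSup_dirDist_relOfFamily]

theorem stmt_5 {A B : Type*} {ι κ : Type*} [Fintype ι] [Nonempty ι] [Fintype κ] [Nonempty κ]
(d : List B → List B → ℕ∞)
    (hd0 : ∀ v v', d v v' = 0 ↔ v = v')
    (hdsymm : ∀ v v', d v v' = d v' v)
    (hdtri : ∀ v v' v'', d v v'' ≤ d v v' + d v' v'')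
    (D : ι → Set (List A)) (f : ι → List A → List B)
    (E : κ → Set (List A)) (g : κ → List A → List B)
    (R S : List A → Set (List B))
    (hR : ∀ u, R u = {v | ∃ i, u ∈ D i ∧ v = f i u})
    (hS : ∀ u, S u = {v | ∃ j, u ∈ E j ∧ v = g j u})
    (hdom : dom R = dom S) :
    relDist d R S =
      max (⨆ i, relativeDist d (D i) (f i) S) (⨆ j, relativeDist d (E j) (g j) R) :=
  stmt_5_general d D f E g R S hR hS hdom
end

section
/- Let ι and κ be finite nonempty types, let (D i, f i) for i : ι and (E j, g j) for j : κ be families of partial word functions, and let R and S be the word relations they define: R u = {v | ∃ i, u ∈ D i ∧ v = f i u} and S u = {v | ∃ j, u ∈ E j ∧ v = g j u}. If dom R = dom S, then for every i : ι, →d(f i, S) ≤ D(R, S), and for every j : κ, →d(g j, R) ≤ D(R, S). -/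
open scoped Classical

/-!
Each image `f i u` is itself a word of `R u`, so its distance to `S u` is one of the terms of the
directed distance from `R u` to `S u`, hence at most `H(R u, S u) ≤ D(R, S)`. The bound for the
`g j` follows in the same way because `D` is symmetric.
-/

section WordRelations

variable {A B : Type*} (d : List B → List B → ℕ∞)

theorem iInf_le_dirDist {L L' : Set (List B)} {v : List B} (hv : v ∈ L) :
    ⨅ v' ∈ L', d v v' ≤ dirDist d L L' :=
  le_iSup₂ (f := fun v _ => ⨅ v' ∈ L', d v v') v hv

theorem hausDist_comm (L L' : Set (List B)) : hausDist d L L' = hausDist d L' L :=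
  max_comm _ _

theorem hausDist_le_relDist {R S : List A → Set (List B)} {u : List A} (hu : u ∈ dom R) :
    hausDist d (R u) (S u) ≤ relDist d R S := by
  unfold relDist
  split_ifs
  · exact le_iSup₂ (f := fun u _ => hausDist d (R u) (S u)) u hu
  · exact le_top

theorem relDist_comm (R S : List A → Set (List B)) : relDist d S R = relDist d R S := by
  unfold relDist
  by_cases hdom : dom R = dom S
  · simp only [hdom, hausDist_comm d (R _)]
  · rw [if_neg (Ne.symm hdom), if_neg hdom]

theorem relativeDist_le_relDist {Df : Set (List A)} {f : List A → List B}
    {R S : List A → Set (List B)} (hf : ∀ u ∈ Df, f u ∈ R u) :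
    relativeDist d Df f S ≤ relDist d R S := by
  have hDf : Df ⊆ dom R := fun u hu => ⟨f u, hf u hu⟩
  by_cases hdom : dom R = dom S
  · rw [relativeDist, if_pos (hDf.trans hdom.subset)]
    refine iSup₂_le fun u hu => ?_
    calc ⨅ v ∈ S u, d (f u) v ≤ dirDist d (R u) (S u) := iInf_le_dirDist d (hf u hu)
      _ ≤ hausDist d (R u) (S u) := le_max_left _ _
      _ ≤ relDist d R S := hausDist_le_relDist d (hDf hu)
  · rw [relDist, if_neg hdom]
    exact le_top

end WordRelations

theorem stmt_6_general {A B : Type*} {ι κ : Type*}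
(d : List B → List B → ℕ∞)
    (D : ι → Set (List A)) (f : ι → List A → List B)
    (E : κ → Set (List A)) (g : κ → List A → List B)
    (R S : List A → Set (List B))
    (hR : ∀ u, R u = {v | ∃ i, u ∈ D i ∧ v = f i u})
    (hS : ∀ u, S u = {v | ∃ j, u ∈ E j ∧ v = g j u}) :
    (∀ i, relativeDist d (D i) (f i) S ≤ relDist d R S) ∧
      (∀ j, relativeDist d (E j) (g j) R ≤ relDist d R S) := by
  refine ⟨fun i => relativeDist_le_relDist d fun u hu => ?_,
    fun j => relDist_comm d R S ▸ relativeDist_le_relDist d fun u hu => ?_⟩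
  · rw [hR]
    exact ⟨i, hu, rfl⟩
  · rw [hS]
    exact ⟨j, hu, rfl⟩

theorem stmt_6 {A B : Type*} {ι κ : Type*} [Fintype ι] [Nonempty ι] [Fintype κ] [Nonempty κ]
(d : List B → List B → ℕ∞)
    (hd0 : ∀ v v', d v v' = 0 ↔ v = v')
    (hdsymm : ∀ v v', d v v' = d v' v)
    (hdtri : ∀ v v' v'', d v v'' ≤ d v v' + d v' v'')
    (D : ι → Set (List A)) (f : ι → List A → List B)
    (E : κ → Set (List A)) (g : κ → List A → List B)
    (R S : List A → Set (List B))
    (hR : ∀ u, R u = {v | ∃ i, u ∈ D i ∧ v = f i u})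
    (hS : ∀ u, S u = {v | ∃ j, u ∈ E j ∧ v = g j u})
    (hdom : dom R = dom S) :
    (∀ i, relativeDist d (D i) (f i) S ≤ relDist d R S) ∧
      (∀ j, relativeDist d (E j) (g j) R ≤ relDist d R S) :=
  stmt_6_general d D f E g R S hR hS
end

section
/- Let ι and κ be finite nonempty types, let (D i, f i) for i : ι and (E j, g j) for j : κ be families of partial word functions, and let R and S be the word relations they define: R u = {v | ∃ i, u ∈ D i ∧ v = f i u} and S u = {v | ∃ j, u ∈ E j ∧ v = g j u}. If dom R = dom S and k : ℕ∞ satisfies →d(f i, S) ≤ k for every i : ι and →d(g j, R) ≤ k for every j : κ, then D(R, S) ≤ k. -/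
open scoped Classical

/-!
Both directed distances between `R u` and `S u` are suprema over outputs `f i u` (resp. `g j u`)
of their distance to the other set, and each such term is one of the terms bounded by the
relative distance `→d(f i, S)` (resp. `→d(g j, R)`).
-/

section

variable {A B : Type*} (d : List B → List B → ℕ∞)

/-- When `Df ⊄ dom S` the relative distance is `⊤`, so then `k = ⊤`. -/
theorem iInf_le_of_relativeDist_le {Df : Set (List A)} {f : List A → List B}
    {S : List A → Set (List B)} {k : ℕ∞} (h : relativeDist d Df f S ≤ k) {u : List A}
    (hu : u ∈ Df) : ⨅ v ∈ S u, d (f u) v ≤ k := by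
  unfold relativeDist at h
  split_ifs at h
  · exact (le_iSup₂ (f := fun u _ => ⨅ v ∈ S u, d (f u) v) u hu).trans h
  · exact le_top.trans h

theorem dirDist_le_of_relativeDist_le {ι : Type*} {D : ι → Set (List A)}
    {f : ι → List A → List B} {R S : List A → Set (List B)} {u : List A}
    (hR : R u ⊆ {v | ∃ i, u ∈ D i ∧ v = f i u}) {k : ℕ∞}
    (hf : ∀ i, relativeDist d (D i) (f i) S ≤ k) : dirDist d (R u) (S u) ≤ k := by
  refine iSup₂_le fun v hv => ?_
  obtain ⟨i, hui, rfl⟩ := hR hv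
  exact iInf_le_of_relativeDist_le d (hf i) hui

theorem relDist_le_of_hausDist_le {R S : List A → Set (List B)} (hdom : dom R = dom S)
    {k : ℕ∞} (h : ∀ u ∈ dom R, hausDist d (R u) (S u) ≤ k) : relDist d R S ≤ k := by
  rw [relDist, if_pos hdom]
  exact iSup₂_le h

end

theorem stmt_7_general {A B : Type*} {ι κ : Type*}
(d : List B → List B → ℕ∞)
    (D : ι → Set (List A)) (f : ι → List A → List B)
    (E : κ → Set (List A)) (g : κ → List A → List B)
    (R S : List A → Set (List B))
    (hR : ∀ u, R u = {v | ∃ i, u ∈ D i ∧ v = f i u})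
    (hS : ∀ u, S u = {v | ∃ j, u ∈ E j ∧ v = g j u})
    (hdom : dom R = dom S)
    (k : ℕ∞)
    (hf : ∀ i, relativeDist d (D i) (f i) S ≤ k)
    (hg : ∀ j, relativeDist d (E j) (g j) R ≤ k) :
    relDist d R S ≤ k :=
  relDist_le_of_hausDist_le d hdom fun u _ =>
    max_le (dirDist_le_of_relativeDist_le d (hR u).subset hf)
      (dirDist_le_of_relativeDist_le d (hS u).subset hg)

theorem stmt_7 {A B : Type*} {ι κ : Type*} [Fintype ι] [Nonempty ι] [Fintype κ] [Nonempty κ]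
(d : List B → List B → ℕ∞)
    (hd0 : ∀ v v', d v v' = 0 ↔ v = v')
    (hdsymm : ∀ v v', d v v' = d v' v)
    (hdtri : ∀ v v' v'', d v v'' ≤ d v v' + d v' v'')
    (D : ι → Set (List A)) (f : ι → List A → List B)
    (E : κ → Set (List A)) (g : κ → List A → List B)
    (R S : List A → Set (List B))
    (hR : ∀ u, R u = {v | ∃ i, u ∈ D i ∧ v = f i u})
    (hS : ∀ u, S u = {v | ∃ j, u ∈ E j ∧ v = g j u})
    (hdom : dom R = dom S)
    (k : ℕ∞)
    (hf : ∀ i, relativeDist d (D i) (f i) S ≤ k)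
    (hg : ∀ j, relativeDist d (E j) (g j) R ≤ k) :
    relDist d R S ≤ k :=
  stmt_7_general d D f E g R S hR hS hdom k hf hg
end
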